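/- Let (X, d) be a metric space, x₀ ∈ X, and let f, g : ([0,1], {0,1}) → (X, x₀) be loops at x₀ such that f is close to g rel {0,1} (in the approximation sense). Then for every open cover 𝒰 of X, the class [f * g⁻¹] ∈ π₁(X, x₀) lies in the Spanier group π₁(𝒰, x₀), assuming X is locally path connected. -/

import Mathlib

universe u

/-- The element of the fundamental group determined by a loop. -/
noncomputable def pathClass {X : Type u} [TopologicalSpace X] {x : X} (α : Path x x) :
    FundamentalGroup X x :=
  @FundamentalGroup.fromPath (TopCat.of X) _ x ⟦α⟧

/-- The Spanier group of `(X, x₀)` with respect to a cover `𝒰`: the subgroup of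
`π₁(X, x₀)` generated by classes of loops `u * v * u⁻¹` where `u` is a path from `x₀`
to a point `y` and `v` is a loop at `y` contained in some member of `𝒰`. -/
noncomputable def spanierGroup {X : Type u} [TopologicalSpace X] (𝒰 : Set (Set X)) (x₀ : X) :
    Subgroup (FundamentalGroup X x₀) :=
  Subgroup.closure {g | ∃ U ∈ 𝒰, ∃ (y : X) (u : Path x₀ y) (v : Path y y),
    Set.range v ⊆ U ∧ g = pathClass ((u.trans v).trans u.symm)}

/-- `𝒰` is an open cover of `X`. -/
def IsOpenCover {X : Type u} [TopologicalSpace X] (𝒰 : Set (Set X)) : Prop :=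
  (∀ U ∈ 𝒰, IsOpen U) ∧ ⋃₀ 𝒰 = Set.univ

/-!
Fix a Lebesgue number `δ` of `𝒰` along the compact set `g([0,1])`. Local path connectedness
is uniform along a compact set, so a loop `f'` uniformly close enough to `g` can be joined to `g`
at the points of a fine partition `0 = t₀ ≤ t₁ ≤ … ≤ t_N = 1` by short paths `cₙ`. Writing
`Fₙ, Gₙ` for the restrictions of `f', g` to `[0, tₙ]`, the rung `Fₙ cₙ Gₙ⁻¹` changes from one
partition point to the next by the conjugate `Gₙ vₙ Gₙ⁻¹` of the loop
`vₙ = cₙ⁻¹ · f'|[tₙ, tₙ₊₁] · cₙ₊₁ · (g|[tₙ, tₙ₊₁])⁻¹`, which lies in the `δ`-ball around `g(tₙ)`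
and hence in a member of `𝒰`. Telescoping, `[f' g⁻¹] = [f g⁻¹]` is a product of generators of
the Spanier group.
-/

open CategoryTheory FundamentalGroupoid Set unitInterval

attribute [local instance] Path.Homotopic.setoid

namespace Spanier

variable {X : Type u} [TopologicalSpace X]

def pathHom {x y : X} (p : Path x y) : mk x ⟶ mk y := ⟦p⟧

@[simp]
lemma pathHom_trans {x y z : X} (p : Path x y) (q : Path y z) :
    pathHom (p.trans q) = pathHom p ≫ pathHom q :=
  rfl

@[simp]
lemma pathHom_symm {x y : X} (p : Path x y) : pathHom p.symm = inv (pathHom p) := by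
  rw [← Groupoid.inv_eq_inv]
  rfl

@[simp]
lemma pathHom_refl (x : X) : pathHom (Path.refl x) = 𝟙 (mk x) :=
  rfl

lemma pathHom_eq_of_homotopic {x y : X} {p q : Path x y} (h : p.Homotopic q) :
    pathHom p = pathHom q :=
  Quotient.sound h

lemma pathClass_eq_pathHom {x : X} (α : Path x x) : pathClass α = pathHom α :=
  rfl

lemma pathHom_cast {x y x' y' : X} (p : Path x y) (hx : x' = x) (hy : y' = y) :
    pathHom (p.cast hx hy) =
      eqToHom (congrArg mk hx) ≫ pathHom p ≫ eqToHom (congrArg mk hy.symm) := by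
  subst hx hy
  simp

lemma pathHom_subpath_comp_pathHom_subpath {a b : X} (γ : Path a b) (t₀ t₁ t₂ : I) :
    pathHom (γ.subpath t₀ t₁) ≫ pathHom (γ.subpath t₁ t₂) = pathHom (γ.subpath t₀ t₂) :=
  pathHom_eq_of_homotopic ⟨Path.Homotopy.subpathTransSubpath γ t₀ t₁ t₂⟩

lemma eqToHom_comp_pathHom_subpath_comp_eqToHom {a b : X} (γ : Path a b) {t₀ t₁ : I}
    (h₀ : t₀ = 0) (h₁ : t₁ = 1) :
    (eqToHom (congrArg mk (show a = γ t₀ by rw [h₀, γ.source])) ≫ pathHom (γ.subpath t₀ t₁)) ≫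
      eqToHom (congrArg mk (show γ t₁ = b by rw [h₁, γ.target])) = pathHom γ := by
  subst h₀ h₁
  simp [pathHom_cast]

def IsRepresentedIn (U : Set X) {y z : X} (φ : mk y ⟶ mk z) : Prop :=
  ∃ p : Path y z, range p ⊆ U ∧ pathHom p = φ

lemma isRepresentedIn_pathHom {U : Set X} {y z : X} {p : Path y z} (hp : range p ⊆ U) :
    IsRepresentedIn U (pathHom p) :=
  ⟨p, hp, rfl⟩

lemma isRepresentedIn_id {U : Set X} {y : X} (hy : y ∈ U) : IsRepresentedIn U (𝟙 (mk y)) :=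
  ⟨Path.refl y, by simpa using hy, rfl⟩

lemma isRepresentedIn_eqToHom {U : Set X} {y z : X} (h : y = z) (hy : y ∈ U) :
    IsRepresentedIn U (eqToHom (congrArg mk h)) := by
  subst h
  exact isRepresentedIn_id hy

lemma IsRepresentedIn.comp {U : Set X} {x y z : X} {φ : mk x ⟶ mk y} {ψ : mk y ⟶ mk z}
    (hφ : IsRepresentedIn U φ) (hψ : IsRepresentedIn U ψ) : IsRepresentedIn U (φ ≫ ψ) := by
  obtain ⟨p, hp, rfl⟩ := hφ
  obtain ⟨q, hq, rfl⟩ := hψ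
  exact ⟨p.trans q, by rw [Path.trans_range]; exact union_subset hp hq, rfl⟩

lemma IsRepresentedIn.inv {U : Set X} {y z : X} {φ : mk y ⟶ mk z}
    (hφ : IsRepresentedIn U φ) : IsRepresentedIn U (inv φ) := by
  obtain ⟨p, hp, rfl⟩ := hφ
  exact ⟨p.symm, by rwa [Path.symm_range], pathHom_symm p⟩

variable {𝒰 : Set (Set X)} {x₀ : X}

lemma conj_mem_spanierGroup {U : Set X} (hU : U ∈ 𝒰) {y : X} (ρ : mk x₀ ⟶ mk y)
    {φ : mk y ⟶ mk y} (hφ : IsRepresentedIn U φ) :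
    (ρ ≫ φ ≫ inv ρ : FundamentalGroup X x₀) ∈ spanierGroup 𝒰 x₀ := by
  obtain ⟨v, hv, rfl⟩ := hφ
  obtain ⟨u, rfl⟩ : ∃ u : Path x₀ y, pathHom u = ρ := Quotient.exists_rep ρ
  refine Subgroup.subset_closure ⟨U, hU, y, u, v, hv, ?_⟩
  simp [pathClass_eq_pathHom]

lemma comp_mem_spanierGroup_of_isRepresentedIn {U : Set X} (hU : U ∈ 𝒰) {y z y' z' : X}
    {P : mk x₀ ⟶ mk y} {Q : mk x₀ ⟶ mk z} {C : mk y ⟶ mk z} {A : mk y ⟶ mk y'}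
    {B : mk z ⟶ mk z'} {C' : mk y' ⟶ mk z'} {P' : mk x₀ ⟶ mk y'} {Q' : mk x₀ ⟶ mk z'}
    (h : (P ≫ C ≫ inv Q : FundamentalGroup X x₀) ∈ spanierGroup 𝒰 x₀)
    (hC : IsRepresentedIn U C) (hA : IsRepresentedIn U A) (hC' : IsRepresentedIn U C')
    (hB : IsRepresentedIn U B) (hP : P ≫ A = P') (hQ : Q ≫ B = Q') :
    (P' ≫ C' ≫ inv Q' : FundamentalGroup X x₀) ∈ spanierGroup 𝒰 x₀ := by
  have hloop := conj_mem_spanierGroup hU Q (hC.inv.comp (hA.comp (hC'.comp hB.inv)))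
  convert mul_mem hloop h using 1
  rw [End.mul_def, ← hP, ← hQ]
  simp

lemma subpath_comp_mem_spanierGroup {a b a' b' : X} (f : Path a b) (g : Path a' b')
    (t : ℕ → I) (c : ∀ n, Path (f (t n)) (g (t n))) {P : mk x₀ ⟶ mk (f (t 0))}
    {Q : mk x₀ ⟶ mk (g (t 0))}
    (h₀ : (P ≫ pathHom (c 0) ≫ inv Q : FundamentalGroup X x₀) ∈ spanierGroup 𝒰 x₀)
    (hstep : ∀ n, ∃ U ∈ 𝒰, range (c n) ⊆ U ∧ range (f.subpath (t n) (t (n + 1))) ⊆ U ∧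
      range (c (n + 1)) ⊆ U ∧ range (g.subpath (t n) (t (n + 1))) ⊆ U) (n : ℕ) :
    ((P ≫ pathHom (f.subpath (t 0) (t n))) ≫ pathHom (c n) ≫
      inv (Q ≫ pathHom (g.subpath (t 0) (t n))) : FundamentalGroup X x₀) ∈
        spanierGroup 𝒰 x₀ := by
  induction n with
  | zero => simpa using h₀
  | succ n ih =>
    obtain ⟨U, hU, hc, hf, hc', hg⟩ := hstep n
    exact comp_mem_spanierGroup_of_isRepresentedIn hU ih (isRepresentedIn_pathHom hc)
      (isRepresentedIn_pathHom hf) (isRepresentedIn_pathHom hc') (isRepresentedIn_pathHom hg)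
      (by rw [Category.assoc, pathHom_subpath_comp_pathHom_subpath])
      (by rw [Category.assoc, pathHom_subpath_comp_pathHom_subpath])

lemma pathClass_trans_symm_mem_spanierGroup_of_ladder {y : X} (f g : Path x₀ y) (t : ℕ → I)
    (ht₀ : t 0 = 0) {N : ℕ} (htN : t N = 1) (c : ∀ n, Path (f (t n)) (g (t n)))
    (hstep : ∀ n, ∃ U ∈ 𝒰, range (c n) ⊆ U ∧ range (f.subpath (t n) (t (n + 1))) ⊆ U ∧
      range (c (n + 1)) ⊆ U ∧ range (g.subpath (t n) (t (n + 1))) ⊆ U) :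
    pathClass (f.trans g.symm) ∈ spanierGroup 𝒰 x₀ := by
  have hx₀ : x₀ = f (t 0) := by rw [ht₀, f.source]
  have hx₀' : x₀ = g (t 0) := by rw [ht₀, g.source]
  have hy : f (t N) = y := by rw [htN, f.target]
  have hy' : g (t N) = y := by rw [htN, g.target]
  have htrivial : (𝟙 (mk x₀) ≫ 𝟙 (mk x₀) ≫ inv (𝟙 (mk x₀)) : FundamentalGroup X x₀) ∈
      spanierGroup 𝒰 x₀ := by
    simp only [IsIso.inv_id, Category.comp_id]
    exact one_mem _
  obtain ⟨U₀, hU₀, hc₀, -⟩ := hstep 0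
  have hx₀U : x₀ ∈ U₀ := by
    rw [hx₀]
    exact hc₀ (c 0).source_mem_range
  have hstart := comp_mem_spanierGroup_of_isRepresentedIn hU₀ htrivial
    (isRepresentedIn_id hx₀U) (isRepresentedIn_eqToHom hx₀ hx₀U) (isRepresentedIn_pathHom hc₀)
    (isRepresentedIn_eqToHom hx₀' hx₀U) (Category.id_comp _) (Category.id_comp _)
  have hN := subpath_comp_mem_spanierGroup f g t c hstart hstep N
  obtain ⟨U, hU, hcN, -⟩ := hstep N
  have hend := comp_mem_spanierGroup_of_isRepresentedIn hU hN (isRepresentedIn_pathHom hcN)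
    (isRepresentedIn_eqToHom hy (hcN (c N).source_mem_range))
    (isRepresentedIn_id (hy' ▸ hcN (c N).target_mem_range))
    (isRepresentedIn_eqToHom hy' (hcN (c N).target_mem_range))
    (eqToHom_comp_pathHom_subpath_comp_eqToHom f ht₀ htN)
    (eqToHom_comp_pathHom_subpath_comp_eqToHom g ht₀ htN)
  rw [pathClass_eq_pathHom]
  simpa using hend

end Spanier

open Metric Spanier

lemma IsCompact.exists_forall_joinedIn_ball {X : Type*} [PseudoMetricSpace X]
    [LocallyPathConnectedSpace X] {K : Set X} (hK : IsCompact K) {r : ℝ} (hr : 0 < r) :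
    ∃ ε > 0, ∀ z ∈ K, ∀ w ∈ ball z ε, JoinedIn (ball z r) w z := by
  have hcover : K ⊆ ⋃ k : K, pathComponentIn (ball (k : X) (r / 2)) k := fun k hk =>
    mem_iUnion.2 ⟨⟨k, hk⟩, mem_pathComponentIn_self (mem_ball_self (half_pos hr))⟩
  obtain ⟨ε, hε, hleb⟩ := lebesgue_number_lemma_of_metric hK
    (fun k => isOpen_ball.pathComponentIn _) hcover
  refine ⟨ε, hε, fun z hz w hw => ?_⟩
  obtain ⟨k, hk⟩ := hleb z hz
  have hkz : JoinedIn (ball (k : X) (r / 2)) k z := hk (mem_ball_self hε)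
  have hkw : JoinedIn (ball (k : X) (r / 2)) k w := hk hw
  refine (hkw.symm.trans hkz).mono (ball_subset_ball' ?_)
  have hzk : z ∈ ball (k : X) (r / 2) := pathComponentIn_subset (hk (mem_ball_self hε))
  rw [mem_ball'] at hzk
  linarith

lemma exists_partition_dist_lt {X : Type*} [PseudoMetricSpace X] {γ : I → X}
    (hγ : Continuous γ) {r : ℝ} (hr : 0 < r) :
    ∃ t : ℕ → I, t 0 = 0 ∧ (∃ N, t N = 1) ∧
      ∀ n, ∀ s ∈ uIcc (t n) (t (n + 1)), dist (γ s) (γ (t n)) < r := by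
  obtain ⟨t, ht₀, hmono, ⟨N, htN⟩, hsub⟩ := exists_monotone_Icc_subset_open_cover_unitInterval
    (c := fun z : X => γ ⁻¹' ball z (r / 2)) (fun z => isOpen_ball.preimage hγ)
    (fun s _ => mem_iUnion.2 ⟨γ s, mem_ball_self (half_pos hr)⟩)
  refine ⟨t, ht₀, ⟨N, htN N le_rfl⟩, fun n s hs => ?_⟩
  obtain ⟨z, hz⟩ := hsub n
  rw [uIcc_of_le (hmono n.le_succ)] at hs
  have hsz : dist (γ s) z < r / 2 := hz hs
  have htz : dist (γ (t n)) z < r / 2 := hz (left_mem_Icc.2 (hmono n.le_succ))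
  calc dist (γ s) (γ (t n)) ≤ dist (γ s) z + dist (γ (t n)) z := dist_triangle_right _ _ _
    _ < r := by linarith

theorem exists_pos_pathClass_trans_symm_mem_spanierGroup {X : Type u} [PseudoMetricSpace X]
    [LocallyPathConnectedSpace X] {𝒰 : Set (Set X)} (h𝒰 : IsOpenCover 𝒰) {x₀ y : X}
    (g : Path x₀ y) :
    ∃ η > 0, ∀ f : Path x₀ y, (∀ s, dist (f s) (g s) < η) →
      pathClass (f.trans g.symm) ∈ spanierGroup 𝒰 x₀ := by
  have hK := isCompact_range g.continuous
  obtain ⟨δ, hδ, hleb⟩ := lebesgue_number_lemma_of_metric_sUnion hK h𝒰.1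
    (by rw [h𝒰.2]; exact subset_univ _)
  obtain ⟨ε, hε, hjoin⟩ := hK.exists_forall_joinedIn_ball (half_pos hδ)
  refine ⟨min ε (δ / 4), by positivity, fun f hfg => ?_⟩
  obtain ⟨t, ht₀, ⟨N, htN⟩, hosc⟩ :=
    exists_partition_dist_lt g.continuous (by positivity : 0 < δ / 4)
  have hjoined n : JoinedIn (ball (g (t n)) (δ / 2)) (f (t n)) (g (t n)) :=
    hjoin _ (mem_range_self _) _ ((hfg (t n)).trans_le (min_le_left _ _))
  have hc n : range (hjoined n).somePath ⊆ ball (g (t n)) (δ / 2) :=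
    range_subset_iff.2 (hjoined n).somePath_mem
  have hf_near (s : I) {n : ℕ} (hs : s ∈ uIcc (t n) (t (n + 1))) :
      dist (f s) (g (t n)) < δ / 2 := by
    have := hfg s
    have := hosc n s hs
    have := dist_triangle (f s) (g s) (g (t n))
    have := min_le_right ε (δ / 4)
    linarith
  refine pathClass_trans_symm_mem_spanierGroup_of_ladder f g t ht₀ htN
    (fun n => (hjoined n).somePath) fun n => ?_
  obtain ⟨U, hU, hball⟩ := hleb _ (mem_range_self (t n))
  refine ⟨U, hU, ?_, ?_, ?_, ?_⟩ <;> refine Subset.trans ?_ hball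
  · exact (hc n).trans (ball_subset_ball (by linarith))
  · rw [Path.range_subpath]
    rintro _ ⟨s, hs, rfl⟩
    exact (hf_near s hs).trans (by linarith)
  · refine (hc (n + 1)).trans (ball_subset_ball' ?_)
    have := hosc n (t (n + 1)) right_mem_uIcc
    linarith
  · rw [Path.range_subpath]
    rintro _ ⟨s, hs, rfl⟩
    exact (hosc n s hs).trans (by linarith)

/-- If loops `f` and `g` at `x₀` in a locally path connected metric space satisfy the
approximation property of closeness rel `{0,1}` — for every `ε > 0` some loop homotopic
rel endpoints to `f` is uniformly `ε`-close to `g` — then `[f * g⁻¹]` lies in the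
Spanier group with respect to every open cover. -/
theorem close_loops_in_spanierGroup {X : Type u} [MetricSpace X]
    [LocallyPathConnectedSpace X] (x₀ : X) (f g : Path x₀ x₀)
    (hclose : ∀ ε > (0 : ℝ), ∃ f' : Path x₀ x₀, f'.Homotopic f ∧
      ∀ s : unitInterval, dist (f' s) (g s) < ε)
    (𝒰 : Set (Set X)) (h𝒰 : IsOpenCover 𝒰) :
    pathClass (f.trans g.symm) ∈ spanierGroup 𝒰 x₀ := by
  obtain ⟨η, hη, hη_mem⟩ := exists_pos_pathClass_trans_symm_mem_spanierGroup h𝒰 g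
  obtain ⟨f', hf'f, hf'g⟩ := hclose η hη
  have hclass : pathClass (f.trans g.symm) = pathClass (f'.trans g.symm) :=
    pathHom_eq_of_homotopic (hf'f.symm.hcomp (.refl _))
  exact hclass ▸ hη_mem f' hf'g
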